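/- arXiv:1805.03864 — 4 statements merged into one kernel-verified Lean document; each statement's English description precedes it below -/
import Mathlib

section
/- Bruhat decomposition, existence part, for GL_n: for every g ∈ GL_n(F) there exist a permutation w ∈ S_n and invertible upper-triangular matrices b₁, b₂ ∈ B such that g = b₁ M_w b₂. -/
open Matrix

variable (F : Type*) [Field F] (n : ℕ)

/-- The Borel subgroup `B` of invertible upper-triangular matrices in `GL_n(F)`. -/
def Bsub : Subgroup (GL (Fin n) F) where
  carrier := {g | BlockTriangular (g : Matrix (Fin n) (Fin n) F) (id : Fin n → Fin n)}
  one_mem' := blockTriangular_one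
  mul_mem' := fun ha hb => ha.mul hb
  inv_mem' := by
    intro g hg
    have : Invertible (g : Matrix (Fin n) (Fin n) F) := g.invertible
    have h := blockTriangular_inv_of_blockTriangular (M := (g : Matrix (Fin n) (Fin n) F)) hg
    simpa [coe_units_inv] using h

/-- The permutation matrix of `w`, with a `1` in position `(w k, k)` for each `k`,
as an element of `GL_n(F)`. -/
def permGL (w : Equiv.Perm (Fin n)) : GL (Fin n) F :=
  { val := (w⁻¹).permMatrix F
    inv := w.permMatrix F
    val_inv := by
      rw [Equiv.Perm.permMatrix, Equiv.Perm.permMatrix, ← PEquiv.toMatrix_trans,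
        ← Equiv.toPEquiv_trans,
        show Equiv.trans w⁻¹ w = Equiv.refl (Fin n) from Equiv.symm_trans_self w,
        Equiv.toPEquiv_refl, PEquiv.toMatrix_refl]
    inv_val := by
      rw [Equiv.Perm.permMatrix, Equiv.Perm.permMatrix, ← PEquiv.toMatrix_trans,
        ← Equiv.toPEquiv_trans,
        show Equiv.trans w w⁻¹ = Equiv.refl (Fin n) from Equiv.self_trans_symm w,
        Equiv.toPEquiv_refl, PEquiv.toMatrix_refl] }

/-- The double coset `B w B ⊆ GL_n(F)`. -/
def doubleCoset (w : Equiv.Perm (Fin n)) : Set (GL (Fin n) F) :=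
  {g | ∃ b₁ ∈ Bsub F n, ∃ b₂ ∈ Bsub F n, g = b₁ * permGL F n w * b₂}

/-! Take the leading entry `M i j` of the lowest nonzero row as pivot: column `j` vanishes below
row `i` and row `i` vanishes left of column `j`, so `M = L * (E_ij + S) * W` where `L` is the
identity with column `i` replaced by column `j` of `M`, `W` the identity with row `j` replaced by
`M i / M i j`, both invertible upper triangular, and `S`, the Schur complement of the pivot, has
zero row `i` and zero column `j`. Recursing on `S`, which has fewer nonzero rows, writes every
square matrix as `U * R * V` with `R` a partial permutation matrix. The recursion keeps
`U e_a = e_a` for the zero rows `a` and `e_b V = e_b` for the zero columns `b`, which is what lets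
`E_ij` pass through the factors produced for `S`. When `M` is invertible so is `R`, which is then
a permutation matrix. -/

namespace Matrix

section Elementary

variable {R ι : Type*} [CommRing R] [DecidableEq ι]

theorem updateCol_one_mulVec_single [Fintype ι] {i a : ι} (c : ι → R) (ha : a ≠ i) :
    updateCol 1 i c *ᵥ Pi.single a 1 = Pi.single a 1 := by
  ext b
  simp [ha, one_apply, Pi.single_apply]

theorem single_vecMul_updateRow_one [Fintype ι] {j b : ι} (r : ι → R) (hb : b ≠ j) :
    Pi.single b 1 ᵥ* updateRow 1 j r = Pi.single b 1 := by
  ext a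
  simp [hb, one_apply, Pi.single_apply, eq_comm]

theorem updateCol_one_mul_of_row_eq_zero [Fintype ι] {S : Matrix ι ι R} {i : ι} (c : ι → R)
    (hS : S i = 0) : updateCol 1 i c * S = S := by
  ext a b
  have : S i b = 0 := congrFun hS b
  by_cases ha : a = i <;>
    simp [mul_apply, updateCol_apply, ite_mul, Finset.sum_ite, Finset.filter_eq', one_apply,
      this, ha]

theorem mul_updateRow_one_of_col_eq_zero [Fintype ι] {S : Matrix ι ι R} {j : ι} (r : ι → R)
    (hS : Sᵀ j = 0) : S * updateRow 1 j r = S := by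
  ext a b
  have : S a j = 0 := congrFun hS a
  by_cases hb : b = j <;>
    simp [mul_apply, updateRow_apply, mul_ite, Finset.sum_ite, Finset.filter_eq', one_apply,
      this, hb]

theorem isUnit_updateCol_one_iff [Fintype ι] {i : ι} {c : ι → R} :
    IsUnit (updateCol 1 i c) ↔ IsUnit (c i) := by
  rw [isUnit_iff_isUnit_det, ← cramer_apply, cramer_one]
  rfl

theorem isUnit_updateRow_one_iff [Fintype ι] {j : ι} {r : ι → R} :
    IsUnit (updateRow 1 j r) ↔ IsUnit (r j) := by
  rw [← transpose_one, updateRow_transpose, isUnit_transpose, isUnit_updateCol_one_iff]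

theorem isUpperTriangular_updateCol_one [LinearOrder ι] {i : ι} {c : ι → R}
    (hc : ∀ a, i < a → c a = 0) : (updateCol 1 i c).IsUpperTriangular := fun a b hab => by
  rcases eq_or_ne b i with rfl | hb
  · simpa using hc a hab
  · rw [updateCol_apply, if_neg hb]
    exact one_apply_ne (ne_of_gt hab)

theorem isUpperTriangular_updateRow_one [LinearOrder ι] {j : ι} {r : ι → R}
    (hr : ∀ b, b < j → r b = 0) : (updateRow 1 j r).IsUpperTriangular := fun a b hab => by
  rcases eq_or_ne a j with rfl | ha
  · simpa using hr b hab
  · rw [updateRow_apply, if_neg ha]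
    exact one_apply_ne (ne_of_gt hab)

theorem mul_single_one_mul [Fintype ι] {U V : Matrix ι ι R} {i j : ι}
    (hU : U *ᵥ Pi.single i 1 = Pi.single i 1) (hV : Pi.single j 1 ᵥ* V = Pi.single j 1) :
    U * single i j 1 * V = single i j 1 := by
  rw [single_eq_single_vecMulVec_single, mul_vecMulVec, vecMulVec_mul, hU, hV]

end Elementary

section Rook

variable {R ι : Type*} [CommRing R] [DecidableEq ι]

def rookMatrix (σ : ι → Option ι) : Matrix ι ι R :=
  of fun a b => if σ b = some a then 1 else 0

theorem rookMatrix_update_of_eq_none {σ : ι → Option ι} {i j : ι} (hj : σ j = none) :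
    rookMatrix (Function.update σ j (some i)) = single i j (1 : R) + rookMatrix σ := by
  ext a b
  rcases eq_or_ne b j with rfl | hb
  · simp [rookMatrix, hj, single_apply, eq_comm]
  · simp [rookMatrix, hb, Ne.symm hb]

theorem rookMatrix_some_comp (w : Equiv.Perm ι) :
    rookMatrix (some ∘ w) = (w⁻¹).permMatrix R := by
  ext a b
  simp [rookMatrix, Equiv.Perm.permMatrix, PEquiv.toMatrix_apply, Equiv.eq_symm_apply, eq_comm]

theorem exists_perm_of_isUnit_rookMatrix [Fintype ι] [Nontrivial R] {σ : ι → Option ι}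
    (h : IsUnit (rookMatrix σ : Matrix ι ι R)) : ∃ w : Equiv.Perm ι, σ = some ∘ w := by
  have hdet : (rookMatrix σ : Matrix ι ι R).det ≠ 0 := ((isUnit_iff_isUnit_det _).mp h).ne_zero
  have hsome : ∀ b, ∃ a, σ b = some a := fun b => by
    refine Option.ne_none_iff_exists'.mp fun hb => hdet (det_eq_zero_of_column_eq_zero b ?_)
    simp [rookMatrix, hb]
  choose τ hτ using hsome
  have hinj : Function.Injective τ := fun b b' hbb' => by
    by_contra hne
    refine hdet (det_zero_of_column_eq hne fun a => ?_)
    simp [rookMatrix, hτ, hbb']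
  exact ⟨Equiv.ofBijective τ (Finite.injective_iff_bijective.mp hinj), funext hτ⟩

end Rook

section Pivot

variable {F} {ι : Type*}

def pivotElim (M : Matrix ι ι F) (i j : ι) : Matrix ι ι F :=
  M - (M i j)⁻¹ • vecMulVec (Mᵀ j) (M i)

variable {M : Matrix ι ι F} {i j : ι}

theorem pivotElim_apply (a b : ι) :
    pivotElim M i j a b = M a b - (M i j)⁻¹ * (M a j * M i b) := by
  simp [pivotElim, vecMulVec_apply]

theorem pivotElim_row_self (h : M i j ≠ 0) : pivotElim M i j i = 0 := by
  ext b
  simp [pivotElim_apply, inv_mul_cancel_left₀ h]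

theorem transpose_pivotElim_col_self (h : M i j ≠ 0) : (pivotElim M i j)ᵀ j = 0 := by
  ext a
  simp [pivotElim_apply, mul_comm (M a j), inv_mul_cancel_left₀ h]

theorem pivotElim_row_eq_zero {a : ι} (ha : M a = 0) : pivotElim M i j a = 0 := by
  ext b
  simp [pivotElim_apply, ha]

theorem transpose_pivotElim_eq_zero {b : ι} (hb : Mᵀ b = 0) : (pivotElim M i j)ᵀ b = 0 := by
  ext a
  have : ∀ a, M a b = 0 := congrFun hb
  simp [pivotElim_apply, this]

theorem ncard_nonzero_rows_pivotElim_lt [Finite ι] (h : M i j ≠ 0) :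
    {a | pivotElim M i j a ≠ 0}.ncard < {a | M a ≠ 0}.ncard := by
  refine Set.ncard_lt_ncard (Set.ssubset_iff_of_subset (fun a => ?_) |>.mpr ⟨i, ?_, ?_⟩)
  · exact mt pivotElim_row_eq_zero
  · exact fun hi => h (congrFun hi j)
  · simpa using pivotElim_row_self h

theorem eq_updateCol_mul_single_add_pivotElim_mul_updateRow [Fintype ι] [DecidableEq ι]
    (h : M i j ≠ 0) :
    M = updateCol 1 i (Mᵀ j) * (single i j 1 + pivotElim M i j) *
      updateRow 1 j ((M i j)⁻¹ • M i) := by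
  have hrank_one : updateCol 1 i (Mᵀ j) * single i j 1 * updateRow 1 j ((M i j)⁻¹ • M i) =
      (M i j)⁻¹ • vecMulVec (Mᵀ j) (M i) := by
    rw [single_eq_single_vecMulVec_single, mul_vecMulVec, vecMulVec_mul, mulVec_single_one,
      single_one_vecMul]
    ext a b
    simp [vecMulVec_apply]
    ring
  rw [mul_add, add_mul, hrank_one, updateCol_one_mul_of_row_eq_zero _ (pivotElim_row_self h),
    mul_updateRow_one_of_col_eq_zero _ (transpose_pivotElim_col_self h), pivotElim,
    add_sub_cancel]

end Pivot

section Decomposition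

variable {F} {ι : Type*} [Fintype ι] [LinearOrder ι]

theorem exists_isLeadingEntry_and_rows_below_eq_zero {M : Matrix ι ι F} (hM : M ≠ 0) :
    ∃ i j, M.IsLeadingEntry i j ∧ ∀ a, i < a → M a = 0 := by
  obtain ⟨i, hi, hmax⟩ := Set.exists_max_image {a | M a ≠ 0} id (Set.toFinite _)
    (Function.ne_iff.mp hM)
  obtain ⟨j, hj⟩ := row_ne_zero_iff_exists_isLeadingEntry.mp hi
  exact ⟨i, j, hj, fun a hia => not_not.mp fun ha => (hmax a ha).not_gt hia⟩

theorem exists_eq_mul_rookMatrix_mul (M : Matrix ι ι F) :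
    ∃ (U V : Matrix ι ι F) (σ : ι → Option ι),
      U.IsUpperTriangular ∧ IsUnit U ∧ V.IsUpperTriangular ∧ IsUnit V ∧
      (∀ a, M a = 0 → U *ᵥ Pi.single a 1 = Pi.single a 1) ∧
      (∀ b, Mᵀ b = 0 → Pi.single b 1 ᵥ* V = Pi.single b 1 ∧ σ b = none) ∧
      M = U * rookMatrix σ * V := by
  by_cases hM : M = 0
  · refine ⟨1, 1, fun _ => none, blockTriangular_one, isUnit_one, blockTriangular_one,
      isUnit_one, fun _ _ => one_mulVec _, fun _ _ => ⟨vecMul_one _, rfl⟩, ?_⟩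
    ext
    simp [hM, rookMatrix]
  obtain ⟨i, j, ⟨hleft, hp⟩, hbelow⟩ := exists_isLeadingEntry_and_rows_below_eq_zero hM
  obtain ⟨U, V, σ, hU, hUu, hV, hVu, hUfix, hVfix, hS⟩ :=
    exists_eq_mul_rookMatrix_mul (pivotElim M i j)
  obtain ⟨hVj, hσj⟩ := hVfix j (transpose_pivotElim_col_self hp)
  refine ⟨updateCol 1 i (Mᵀ j) * U, V * updateRow 1 j ((M i j)⁻¹ • M i),
    Function.update σ j (some i),
    (isUpperTriangular_updateCol_one fun a hia => congrFun (hbelow a hia) j).mul hU,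
    ((isUnit_updateCol_one_iff (c := Mᵀ j)).mpr hp.isUnit).mul hUu,
    hV.mul (isUpperTriangular_updateRow_one fun b hbj => by simp [hleft b hbj]),
    hVu.mul (isUnit_updateRow_one_iff.mpr (by simp [hp])), fun a ha => ?_, fun b hb => ?_, ?_⟩
  · have hai : a ≠ i := by rintro rfl; exact hp (congrFun ha j)
    rw [← mulVec_mulVec, hUfix a (pivotElim_row_eq_zero ha), updateCol_one_mulVec_single _ hai]
  · have hbj : b ≠ j := by rintro rfl; exact hp (congrFun hb i)
    obtain ⟨hVb, hσb⟩ := hVfix b (transpose_pivotElim_eq_zero hb)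
    rw [← vecMul_vecMul, hVb, single_vecMul_updateRow_one _ hbj, Function.update_of_ne hbj]
    exact ⟨rfl, hσb⟩
  · have hcore : single i j 1 + pivotElim M i j =
        U * rookMatrix (Function.update σ j (some i)) * V := by
      rw [rookMatrix_update_of_eq_none hσj, Matrix.mul_add, Matrix.add_mul,
        mul_single_one_mul (hUfix i (pivotElim_row_self hp)) hVj, hS]
    conv_lhs => rw [eq_updateCol_mul_single_add_pivotElim_mul_updateRow hp, hcore]
    simp only [Matrix.mul_assoc]
termination_by {a | M a ≠ 0}.ncard
decreasing_by exact ncard_nonzero_rows_pivotElim_lt hp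

end Decomposition

end Matrix

theorem bruhat_decomposition_exists_general (F : Type*) [Field F] (n : ℕ)
    (g : GL (Fin n) F) :
    ∃ (w : Equiv.Perm (Fin n)) (b₁ b₂ : GL (Fin n) F),
      b₁ ∈ Bsub F n ∧ b₂ ∈ Bsub F n ∧ g = b₁ * permGL F n w * b₂ := by
  obtain ⟨U, V, σ, hU, hUu, hV, hVu, -, -, hg⟩ :=
    Matrix.exists_eq_mul_rookMatrix_mul (g : Matrix (Fin n) (Fin n) F)
  have hR : IsUnit (Matrix.rookMatrix σ : Matrix (Fin n) (Fin n) F) := by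
    rw [Matrix.isUnit_iff_isUnit_det] at hUu hVu ⊢
    have := (Matrix.isUnit_iff_isUnit_det _).mp g.isUnit
    rw [hg, Matrix.det_mul, Matrix.det_mul] at this
    exact isUnit_of_mul_isUnit_right (isUnit_of_mul_isUnit_left this)
  obtain ⟨w, rfl⟩ := Matrix.exists_perm_of_isUnit_rookMatrix hR
  refine ⟨w, hUu.unit, hVu.unit, hU, hV, Units.ext ?_⟩
  rw [Units.val_mul, Units.val_mul, IsUnit.unit_spec, IsUnit.unit_spec, hg,
    Matrix.rookMatrix_some_comp]
  rfl

/-- **Bruhat decomposition for GL_n, existence part.**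
Every `g ∈ GL_n(F)` can be written as `g = b₁ M_w b₂` with `w ∈ S_n` a permutation and
`b₁, b₂` invertible upper-triangular matrices. -/
theorem bruhat_decomposition_exists (F : Type*) [Field F] (n : ℕ) (hn : 2 ≤ n)
    (g : GL (Fin n) F) :
    ∃ (w : Equiv.Perm (Fin n)) (b₁ b₂ : GL (Fin n) F),
      b₁ ∈ Bsub F n ∧ b₂ ∈ Bsub F n ∧ g = b₁ * permGL F n w * b₂ :=
  bruhat_decomposition_exists_general F n g
end

section
/- Bruhat decomposition, uniqueness part, for GL_n: if w, w' ∈ S_n and b₁, b₂, b₁', b₂' ∈ B satisfy b₁ M_w b₂ = b₁' M_{w'} b₂', then w = w'. Equivalently, the double cosets BwB for w ∈ S_n are pairwise disjoint. -/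
/-!
Bringing the two outer factors to the other side turns `b₁ M_w b₂ = b₁' M_{w'} b₂'` into
`a M_w = M_{w'} b` with `a, b ∈ B`. The `(w' j, j)` entry of the right side is the diagonal
entry `b j j ≠ 0`, while that of the left side is `a (w' j) (w j)`, which vanishes unless
`w' j ≤ w j` since `a` is upper triangular. Exchanging the roles of `w` and `w'` gives `w = w'`.
-/

open Matrix

variable (F : Type*) [Field F] (n : ℕ)

theorem Matrix.IsUpperTriangular.isUnit_diag {R m : Type*} [CommRing R] [Fintype m]
    [LinearOrder m] {M : Matrix m m R} (hM : M.IsUpperTriangular) (hdet : IsUnit M.det)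
    (i : m) : IsUnit (M i i) := by
  rw [det_of_isUpperTriangular hM, ← Finset.mul_prod_erase _ _ (Finset.mem_univ i)] at hdet
  exact isUnit_of_mul_isUnit_left hdet

theorem inv_mul_mul_eq_mul_mul_inv {G : Type*} [Group G] {a x b a' y b' : G}
    (h : a * x * b = a' * y * b') : a'⁻¹ * a * x = y * (b' * b⁻¹) :=
  calc a'⁻¹ * a * x = a'⁻¹ * (a * x * b) * b⁻¹ := by group
    _ = y * (b' * b⁻¹) := by rw [h]; group

section Bruhat

variable {F n}

theorem mem_Bsub_iff {g : GL (Fin n) F} :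
    g ∈ Bsub F n ↔ (g : Matrix (Fin n) (Fin n) F).IsUpperTriangular :=
  Iff.rfl

theorem Bsub.diag_ne_zero {b : GL (Fin n) F} (hb : b ∈ Bsub F n) (i : Fin n) :
    (b : Matrix (Fin n) (Fin n) F) i i ≠ 0 :=
  ((mem_Bsub_iff.mp hb).isUnit_diag ((Matrix.isUnit_iff_isUnit_det _).mp b.isUnit) i).ne_zero

theorem mul_permGL_apply (a : GL (Fin n) F) (w : Equiv.Perm (Fin n)) (i j : Fin n) :
    ((a * permGL F n w : GL (Fin n) F) : Matrix (Fin n) (Fin n) F) i j = a i (w j) := by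
  simp [permGL, Equiv.Perm.permMatrix, PEquiv.mul_toMatrix_toPEquiv, Equiv.Perm.inv_def]

theorem permGL_mul_apply (w : Equiv.Perm (Fin n)) (b : GL (Fin n) F) (i j : Fin n) :
    ((permGL F n w * b : GL (Fin n) F) : Matrix (Fin n) (Fin n) F) i j = b (w⁻¹ i) j := by
  simp [permGL, Equiv.Perm.permMatrix, PEquiv.toMatrix_toPEquiv_mul]

theorem le_of_mul_permGL_eq_permGL_mul {w w' : Equiv.Perm (Fin n)} {a b : GL (Fin n) F}
    (ha : a ∈ Bsub F n) (hb : b ∈ Bsub F n) (h : a * permGL F n w = permGL F n w' * b)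
    (j : Fin n) : w' j ≤ w j := by
  have hentry : (a : Matrix (Fin n) (Fin n) F) (w' j) (w j) = b j j := by
    rw [← mul_permGL_apply, h, permGL_mul_apply, Equiv.Perm.inv_def, Equiv.symm_apply_apply]
  by_contra! hlt
  exact Bsub.diag_ne_zero hb j (hentry ▸ ha hlt)

end Bruhat

theorem bruhat_decomposition_unique_general (F : Type*) [Field F] (n : ℕ)
    (w w' : Equiv.Perm (Fin n)) (b₁ b₂ b₁' b₂' : GL (Fin n) F)
    (hb₁ : b₁ ∈ Bsub F n) (hb₂ : b₂ ∈ Bsub F n) (hb₁' : b₁' ∈ Bsub F n) (hb₂' : b₂' ∈ Bsub F n)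
    (h : b₁ * permGL F n w * b₂ = b₁' * permGL F n w' * b₂') :
    w = w' := by
  refine Equiv.ext fun j => le_antisymm ?_ ?_
  · exact le_of_mul_permGL_eq_permGL_mul (mul_mem (inv_mem hb₁) hb₁')
      (mul_mem hb₂ (inv_mem hb₂')) (inv_mul_mul_eq_mul_mul_inv h.symm) j
  · exact le_of_mul_permGL_eq_permGL_mul (mul_mem (inv_mem hb₁') hb₁)
      (mul_mem hb₂' (inv_mem hb₂)) (inv_mul_mul_eq_mul_mul_inv h) j

/-- **Bruhat decomposition for `GL_n`, uniqueness part.**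
If `b₁ M_w b₂ = b₁' M_{w'} b₂'` with `b₁, b₂, b₁', b₂'` invertible upper-triangular, then
`w = w'`; equivalently, the double cosets `BwB` are pairwise disjoint. -/
theorem bruhat_decomposition_unique (F : Type*) [Field F] (n : ℕ) (hn : 2 ≤ n)
    (w w' : Equiv.Perm (Fin n)) (b₁ b₂ b₁' b₂' : GL (Fin n) F)
    (hb₁ : b₁ ∈ Bsub F n) (hb₂ : b₂ ∈ Bsub F n) (hb₁' : b₁' ∈ Bsub F n) (hb₂' : b₂' ∈ Bsub F n)
    (h : b₁ * permGL F n w * b₂ = b₁' * permGL F n w' * b₂') :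
    w = w' :=
  bruhat_decomposition_unique_general F n w w' b₁ b₂ b₁' b₂' hb₁ hb₂ hb₁' hb₂' h
end

section
/- Over the finite field F = 𝔽_q, for every w ∈ S_n the number of cosets gB with g ∈ BwB (i.e., the cardinality of the Schubert cell BwB/B) equals q^{ℓ(w)}. -/
open Matrix

variable (F : Type*) [Field F] (n : ℕ)

/-- The elementary unipotent matrix `I + c E_{a b}` (for `a ≠ b`) as an element of `GL_n(F)`. -/
def elemGL (a b : Fin n) (hab : a ≠ b) (c : F) : GL (Fin n) F :=
  { val := transvection a b c
    inv := transvection a b (-c)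
    val_inv := by
      rw [transvection_mul_transvection_same _ _ hab, add_neg_cancel, transvection_zero]
    inv_val := by
      rw [transvection_mul_transvection_same _ _ hab, neg_add_cancel, transvection_zero] }

/-- `x_k(c) = I + c E_{k,k+1}` (rows/columns of `Fin n` being numbered `1, …, n`),
for `1 ≤ k ≤ n-1`; junk value `1` for out-of-range `k`. -/
def xGL (k : ℕ) (c : F) : GL (Fin n) F :=
  if h : 0 < k ∧ k < n then
    elemGL F n ⟨k - 1, by omega⟩ ⟨k, h.2⟩ (by simp [Fin.ext_iff]; omega) c
  else 1

/-- `y_k(c) = I + c E_{k+1,k}`, for `1 ≤ k ≤ n-1`; junk value `1` for out-of-range `k`. -/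
def yGL (k : ℕ) (c : F) : GL (Fin n) F :=
  if h : 0 < k ∧ k < n then
    elemGL F n ⟨k, h.2⟩ ⟨k - 1, by omega⟩ (by simp [Fin.ext_iff]; omega) c
  else 1

/-- `n_k = (I + E_{k,k+1})(I − E_{k+1,k})(I + E_{k,k+1})`. -/
def nGL (k : ℕ) : GL (Fin n) F := xGL F n k 1 * yGL F n k (-1) * xGL F n k 1

/-- The adjacent transposition `s_k = (k, k+1)` (with `1, …, n` numbering),
for `1 ≤ k ≤ n-1`; junk value `1` for out-of-range `k`. -/
def sT (k : ℕ) : Equiv.Perm (Fin n) :=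
  if h : 0 < k ∧ k < n then Equiv.swap ⟨k - 1, by omega⟩ ⟨k, h.2⟩ else 1

/-- The length `ℓ(w)` of a permutation: its number of inversions. -/
def invCount (w : Equiv.Perm (Fin n)) : ℕ :=
  (Finset.univ.filter fun p : Fin n × Fin n => p.1 < p.2 ∧ w p.2 < w p.1).card

/-- `l` is a reduced word for `w`: a minimal-length expression of `w` as a product of
adjacent transpositions. -/
def IsReducedWord (l : List ℕ) (w : Equiv.Perm (Fin n)) : Prop :=
  (∀ k ∈ l, 0 < k ∧ k < n) ∧ (l.map (sT n)).prod = w ∧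
    ∀ l' : List ℕ, (∀ k ∈ l', 0 < k ∧ k < n) → (l'.map (sT n)).prod = w →
      l.length ≤ l'.length

/-- The product `x_{i₁}(c₁) n_{i₁}⁻¹ ⋯ x_{i_ℓ}(c_ℓ) n_{i_ℓ}⁻¹` attached to a word
`l = [i₁, …, i_ℓ]` and parameters `c : Fin l.length → F`. -/
def prodWord (l : List ℕ) (c : Fin l.length → F) : GL (Fin n) F :=
  (List.ofFn fun m : Fin l.length => xGL F n (l.get m) (c m) * (nGL F n (l.get m))⁻¹).prod

/-- The standard maximal parabolic subgroup `P_j ≤ GL_n(F)` (for `1 ≤ j ≤ n-1`):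
the stabilizer of `span(e_1, …, e_j)`, i.e. the invertible block upper-triangular matrices
with diagonal blocks of sizes `j` and `n - j`. -/
def Pmax (j : ℕ) : Subgroup (GL (Fin n) F) where
  carrier := {g | BlockTriangular (g : Matrix (Fin n) (Fin n) F)
    (fun a : Fin n => if (a : ℕ) < j then (0 : ℕ) else 1)}
  one_mem' := blockTriangular_one
  mul_mem' := fun ha hb => ha.mul hb
  inv_mem' := by
    intro g hg
    have : Invertible (g : Matrix (Fin n) (Fin n) F) := g.invertible
    have h := blockTriangular_inv_of_blockTriangular (M := (g : Matrix (Fin n) (Fin n) F)) hg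
    simpa [coe_units_inv] using h

/-- `W_j = {w ∈ S_n : w({1,…,j}) = {1,…,j}}`. -/
def Wfix (j : ℕ) : Set (Equiv.Perm (Fin n)) :=
  {w | (fun a => w a) '' {a : Fin n | (a : ℕ) < j} = {a : Fin n | (a : ℕ) < j}}

/-- `W^j`: the set of permutations of minimal length (fewest inversions) in their left coset
`u W_j`. -/
def minReps (j : ℕ) : Set (Equiv.Perm (Fin n)) :=
  {u | ∀ y ∈ Wfix n j, invCount n u ≤ invCount n (u * y)}

/-- `(W_j)^{i,j}`: the set of elements of `W_j` of minimal length in their left coset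
`z W_{i,j}` inside `W_j`, where `W_{i,j} = W_i ∩ W_j`. -/
def minRepsIn (i j : ℕ) : Set (Equiv.Perm (Fin n)) :=
  {z | z ∈ Wfix n j ∧ ∀ v ∈ Wfix n i ∩ Wfix n j, invCount n z ≤ invCount n (z * v)}


/-! The cell `BwB/B` is the `B`-orbit of `wB` in `G/B`, and the stabilizer of `wB` in `B` is
`B ∩ wBw⁻¹`. Both groups consist of the invertible upper-triangular matrices whose
off-diagonal entries vanish outside a prescribed set of positions above the diagonal: all
`n(n-1)/2` of them for `B`, and for `B ∩ wBw⁻¹` the pairs `i < j` with `w⁻¹ i < w⁻¹ j`, of which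
there are `n(n-1)/2 - ℓ(w)`. Such a group has `(q-1)^n q^k` elements, `k` the number of
positions, so the orbit-stabilizer theorem gives `|BwB/B| = q^{ℓ(w)}`. -/

open Finset

section GLSupportedOn

variable {F}
variable {ι : Type*} [Fintype ι] [LinearOrder ι]

variable (F) in
def glSupportedOn (P : Finset (ι × ι)) : Set (GL ι F) :=
  {g | ∀ i j, i ≠ j → (i, j) ∉ P → (g : Matrix ι ι F) i j = 0}

variable {P : Finset (ι × ι)}

lemma isUpperTriangular_of_mem_glSupportedOn (hP : ∀ p ∈ P, p.1 < p.2) {g : GL ι F}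
    (hg : g ∈ glSupportedOn F P) : (g : Matrix ι ι F).IsUpperTriangular := fun i j hji =>
  hg i j hji.ne' fun h => (hP _ h).not_gt hji

lemma diag_ne_zero_of_mem_glSupportedOn (hP : ∀ p ∈ P, p.1 < p.2) {g : GL ι F}
    (hg : g ∈ glSupportedOn F P) (i : ι) : (g : Matrix ι ι F) i i ≠ 0 := by
  have hdet := ((Matrix.isUnit_iff_isUnit_det _).1 g.isUnit).ne_zero
  rw [det_of_isUpperTriangular (isUpperTriangular_of_mem_glSupportedOn hP hg)] at hdet
  exact Finset.prod_ne_zero_iff.1 hdet i (Finset.mem_univ i)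

variable (P) in
def matrixOfDiagAndEntries (d : ι → F) (c : P → F) : Matrix ι ι F :=
  Matrix.of fun i j => if i = j then d i else if h : (i, j) ∈ P then c ⟨(i, j), h⟩ else 0

lemma isUnit_matrixOfDiagAndEntries (hP : ∀ p ∈ P, p.1 < p.2) (d : ι → Fˣ) (c : P → F) :
    IsUnit (matrixOfDiagAndEntries P (fun i => (d i : F)) c) := by
  have htri : (matrixOfDiagAndEntries P (fun i => (d i : F)) c).IsUpperTriangular :=
    fun i j (hji : j < i) => by
      rw [matrixOfDiagAndEntries, of_apply, if_neg hji.ne',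
        dif_neg fun h => (hP (i, j) h).not_gt hji]
  rw [Matrix.isUnit_iff_isUnit_det, det_of_isUpperTriangular htri]
  refine isUnit_iff_ne_zero.2 (Finset.prod_ne_zero_iff.2 fun i _ => ?_)
  simp [matrixOfDiagAndEntries]

noncomputable def glSupportedOnEquiv (hP : ∀ p ∈ P, p.1 < p.2) :
    glSupportedOn F P ≃ (ι → Fˣ) × (P → F) where
  toFun g := (fun i => Units.mk0 _ (diag_ne_zero_of_mem_glSupportedOn hP g.2 i),
    fun p => ((g : GL ι F) : Matrix ι ι F) p.1.1 p.1.2)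
  invFun dc := ⟨(isUnit_matrixOfDiagAndEntries hP dc.1 dc.2).unit, fun i j hij hijP => by
    simp [matrixOfDiagAndEntries, hij, hijP]⟩
  left_inv g := by
    ext i j
    by_cases hij : i = j
    · subst hij; simp [matrixOfDiagAndEntries]
    · by_cases hijP : (i, j) ∈ P
      · simp [matrixOfDiagAndEntries, hij, hijP]
      · simp [matrixOfDiagAndEntries, hij, hijP, g.2 i j hij hijP]
  right_inv dc := by
    ext p
    · simp [matrixOfDiagAndEntries]
    · simp [matrixOfDiagAndEntries, (hP _ p.2).ne]

lemma card_glSupportedOn [Fintype F] (hP : ∀ p ∈ P, p.1 < p.2) :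
    Nat.card (glSupportedOn F P) =
      (Fintype.card F - 1) ^ Fintype.card ι * Fintype.card F ^ P.card := by
  rw [Nat.card_congr (glSupportedOnEquiv hP), Nat.card_prod, Nat.card_fun, Nat.card_fun,
    Nat.card_units]
  simp only [Nat.card_eq_fintype_card, Fintype.card_coe]

end GLSupportedOn

section Schubert

variable {F n}

lemma permGL_inv_mul_mul_permGL_apply (w : Equiv.Perm (Fin n)) (g : GL (Fin n) F) (i j : Fin n) :
    (((permGL F n w)⁻¹ * g * permGL F n w : GL (Fin n) F) : Matrix (Fin n) (Fin n) F) i j =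
      (g : Matrix (Fin n) (Fin n) F) (w i) (w j) := by
  change (((w : Fin n ≃ Fin n).toPEquiv.toMatrix : Matrix (Fin n) (Fin n) F) *
    (g : Matrix (Fin n) (Fin n) F) * (w⁻¹ : Equiv.Perm (Fin n)).toPEquiv.toMatrix :
      Matrix (Fin n) (Fin n) F) i j = _
  rw [PEquiv.toMatrix_toPEquiv_mul, PEquiv.mul_toMatrix_toPEquiv]
  simp [Equiv.Perm.inv_def]

lemma conj_permGL_mem_Bsub_iff (w : Equiv.Perm (Fin n)) (g : GL (Fin n) F) :
    (permGL F n w)⁻¹ * g * permGL F n w ∈ Bsub F n ↔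
      ∀ i j, w⁻¹ j < w⁻¹ i → (g : Matrix (Fin n) (Fin n) F) i j = 0 := by
  refine ⟨fun h i j hij => ?_, fun h i j (hij : j < i) => ?_⟩
  · simpa [permGL_inv_mul_mul_permGL_apply] using h hij
  · rw [permGL_inv_mul_mul_permGL_apply]
    exact h _ _ (by simpa using hij)

lemma mem_Bsub_iff_mem_glSupportedOn (g : GL (Fin n) F) :
    g ∈ Bsub F n ↔ g ∈ glSupportedOn F (univ.filter fun p : Fin n × Fin n => p.1 < p.2) := by
  refine ⟨fun hg i j hne hij => hg ?_, isUpperTriangular_of_mem_glSupportedOn (by simp)⟩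
  simp only [mem_filter, mem_univ, true_and, not_lt] at hij
  exact lt_of_le_of_ne hij hne.symm

lemma mem_Bsub_and_conj_mem_Bsub_iff (w : Equiv.Perm (Fin n)) (g : GL (Fin n) F) :
    g ∈ Bsub F n ∧ (permGL F n w)⁻¹ * g * permGL F n w ∈ Bsub F n ↔
      g ∈ glSupportedOn F
        (univ.filter fun p : Fin n × Fin n => p.1 < p.2 ∧ w⁻¹ p.1 < w⁻¹ p.2) := by
  rw [conj_permGL_mem_Bsub_iff]
  constructor
  · rintro ⟨hB, hC⟩ i j hne hij
    simp only [mem_filter, mem_univ, true_and, not_and, not_lt] at hij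
    rcases hne.lt_or_gt with hlt | hgt
    · exact hC i j (lt_of_le_of_ne (hij hlt) (w⁻¹.injective.ne hne.symm))
    · exact hB hgt
  · intro hg
    refine ⟨isUpperTriangular_of_mem_glSupportedOn (fun p hp => (mem_filter.1 hp).2.1) hg,
      fun i j hij => hg i j (fun h => hij.ne' (congrArg _ h)) ?_⟩
    simp only [mem_filter, mem_univ, true_and, not_and, not_lt]
    exact fun _ => hij.le

lemma invCount_inv (w : Equiv.Perm (Fin n)) : invCount n w⁻¹ = invCount n w := by
  refine card_nbij' (fun p => (w⁻¹ p.2, w⁻¹ p.1)) (fun p => (w p.2, w p.1)) ?_ ?_ ?_ ?_ <;>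
    intro p hp <;> simp_all

lemma card_filter_lt_eq_add_invCount (w : Equiv.Perm (Fin n)) :
    #(univ.filter fun p : Fin n × Fin n => p.1 < p.2) =
      #(univ.filter fun p : Fin n × Fin n => p.1 < p.2 ∧ w⁻¹ p.1 < w⁻¹ p.2) + invCount n w := by
  rw [← invCount_inv, invCount, ← filter_filter, ← filter_filter,
    ← card_filter_add_card_filter_not (fun p : Fin n × Fin n => w⁻¹ p.1 < w⁻¹ p.2)]
  congr 2
  refine filter_congr fun p hp => ?_
  have hne : w⁻¹ p.1 ≠ w⁻¹ p.2 := w⁻¹.injective.ne (mem_filter.1 hp).2.ne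
  exact ⟨fun h => lt_of_le_of_ne (not_lt.1 h) hne.symm, fun h => h.not_gt⟩

lemma schubertCell_eq_orbit (w : Equiv.Perm (Fin n)) :
    {x : GL (Fin n) F ⧸ Bsub F n | ∃ g ∈ doubleCoset F n w, QuotientGroup.mk g = x} =
      MulAction.orbit (Bsub F n)
        (QuotientGroup.mk (permGL F n w) : GL (Fin n) F ⧸ Bsub F n) := by
  ext x
  constructor
  · rintro ⟨g, ⟨b₁, hb₁, b₂, hb₂, rfl⟩, rfl⟩
    exact ⟨⟨b₁, hb₁⟩, (QuotientGroup.mk_mul_of_mem (b₁ * permGL F n w) hb₂).symm⟩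
  · rintro ⟨b, rfl⟩
    exact ⟨b * permGL F n w, ⟨b, b.2, 1, one_mem _, (mul_one _).symm⟩, rfl⟩

lemma mem_stabilizer_mk_permGL_iff (w : Equiv.Perm (Fin n)) (b : Bsub F n) :
    b ∈ MulAction.stabilizer (Bsub F n)
        (QuotientGroup.mk (permGL F n w) : GL (Fin n) F ⧸ Bsub F n) ↔
      (permGL F n w)⁻¹ * b * permGL F n w ∈ Bsub F n := by
  rw [MulAction.mem_stabilizer_iff]
  change (b : GL (Fin n) F) • (QuotientGroup.mk (permGL F n w) : GL (Fin n) F ⧸ Bsub F n) = _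
    ↔ _
  rw [MulAction.Quotient.smul_mk, smul_eq_mul, QuotientGroup.eq, ← inv_mem_iff]
  group

variable [Fintype F]

lemma card_Bsub :
    Nat.card (Bsub F n) = (Fintype.card F - 1) ^ n *
      Fintype.card F ^ #(univ.filter fun p : Fin n × Fin n => p.1 < p.2) := by
  rw [Nat.card_congr (Equiv.subtypeEquivRight mem_Bsub_iff_mem_glSupportedOn),
    card_glSupportedOn (by simp), Fintype.card_fin]

lemma card_stabilizer_mk_permGL (w : Equiv.Perm (Fin n)) :
    Nat.card (MulAction.stabilizer (Bsub F n)
        (QuotientGroup.mk (permGL F n w) : GL (Fin n) F ⧸ Bsub F n)) =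
      (Fintype.card F - 1) ^ n * Fintype.card F ^
        #(univ.filter fun p : Fin n × Fin n => p.1 < p.2 ∧ w⁻¹ p.1 < w⁻¹ p.2) := by
  rw [Nat.card_congr (((Equiv.subtypeEquivRight (mem_stabilizer_mk_permGL_iff w)).trans
      (Equiv.subtypeSubtypeEquivSubtypeInter (· ∈ Bsub F n)
        fun g => (permGL F n w)⁻¹ * g * permGL F n w ∈ Bsub F n)).trans
        (Equiv.subtypeEquivRight (mem_Bsub_and_conj_mem_Bsub_iff w))),
    card_glSupportedOn fun p hp => (mem_filter.1 hp).2.1, Fintype.card_fin]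

end Schubert

theorem schubert_cell_card_general (q : ℕ)
    (F : Type*) [Field F] [Fintype F] (hF : Fintype.card F = q)
    (n : ℕ) (w : Equiv.Perm (Fin n)) :
    Set.ncard {x : GL (Fin n) F ⧸ Bsub F n | ∃ g ∈ doubleCoset F n w, QuotientGroup.mk g = x} =
      q ^ invCount n w := by
  subst hF
  rw [schubertCell_eq_orbit, ← Nat.card_coe_set_eq]
  have orbit_stabilizer := Nat.card_congr (MulAction.orbitProdStabilizerEquivGroup (Bsub F n)
    (QuotientGroup.mk (permGL F n w) : GL (Fin n) F ⧸ Bsub F n))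
  rw [Nat.card_prod, card_stabilizer_mk_permGL, card_Bsub, card_filter_lt_eq_add_invCount w,
    pow_add] at orbit_stabilizer
  have hcard : 1 < Fintype.card F := Fintype.one_lt_card
  refine Nat.eq_of_mul_eq_mul_right ?_ (orbit_stabilizer.trans (by ring))
  exact Nat.mul_pos (Nat.pow_pos (Nat.sub_pos_of_lt hcard)) (Nat.pow_pos (Nat.zero_lt_of_lt hcard))

/-- **Cardinality of Schubert cells over a finite field.**
Over `F = 𝔽_q`, the Schubert cell `BwB/B` has exactly `q^{ℓ(w)}` elements, where `ℓ(w)` is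
the number of inversions of `w`. -/
theorem schubert_cell_card (q : ℕ) (hq : IsPrimePow q)
    (F : Type*) [Field F] [Fintype F] (hF : Fintype.card F = q)
    (n : ℕ) (hn : 2 ≤ n) (w : Equiv.Perm (Fin n)) :
    Set.ncard {x : GL (Fin n) F ⧸ Bsub F n | ∃ g ∈ doubleCoset F n w, QuotientGroup.mk g = x} =
      q ^ invCount n w :=
  schubert_cell_card_general q F hF n w
end

section
/- Corollary 4.4 for GL_n over a finite field: fix 1 ≤ i, j ≤ n−1 with i ≠ j and w ∈ S_n. Every line of the Schubert incidence structure (X_w)_{ij} is incident to at most two points if and only if: w ∈ W^j W_{i,j} when q > 2, and w ∈ W^j W_{i,j} ∪ W^j s_i W_{i,j} when q = 2 (where s_i is the adjacent transposition (i, i+1)). Equivalently, in the unique factorization w = u z v with u ∈ W^j, z ∈ (W_j)^{i,j}, v ∈ W_{i,j}, the condition is z = 1 when q > 2 and z ∈ {1, s_i} when q = 2. -/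
open Matrix

variable (F : Type*) [Field F] (n : ℕ)

/-!
Write `w = u z v`. Since `z v ∈ P_j`, the line `b w b' P_j` (`b, b' ∈ B`) is the `b`-translate of
the line `u P_j`, and its points are the cosets `b u m z P_i` with `m ∈ P_j ∩ u⁻¹ B u`.
Minimality of `u` in `u W_j` makes every such `m` upper triangular. If `z = 1` all these cosets
equal `b u P_i`. If `z = s_i` swaps `x` and `y = x + 1`, then `m s_i P_i = (I + t E_{x y}) s_i P_i`
with `t = m_{x y} / m_{y y}`, so for `q = 2` there are at most two points.

Conversely, minimality of `z` in `z W_{i,j}` forces every inversion `c < d`, `z d < z c`, to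
straddle `i` (as `Fin n` indices: `c < i ≤ d`) without straddling `j`. The transvections
`I + t E_{z d, z c}` then lie in `P_j ∩ u⁻¹ B u` and give pairwise distinct points for distinct `t`,
hence three points when `q > 2`. When `q = 2` and `z ∉ {1, s_i}`, `z` has a second inversion,
and `t = 1` there gives a third point.
-/

variable {F n} {i j : ℕ}

lemma mem_Pmax_iff {g : GL (Fin n) F} :
    g ∈ Pmax F n j ↔
      ∀ a b : Fin n, (b : ℕ) < j → j ≤ (a : ℕ) → (g : Matrix (Fin n) (Fin n) F) a b = 0 := by
  refine forall₂_congr fun a b => ⟨fun h hb ha => h (by simp [hb, ha.not_gt]), fun h hab => ?_⟩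
  by_cases hb : (b : ℕ) < j <;> by_cases ha : (a : ℕ) < j <;> simp [ha, hb] at hab
  exact h hb (not_lt.1 ha)

lemma Bsub_le_Pmax (j : ℕ) : Bsub F n ≤ Pmax F n j :=
  fun _ hg => mem_Pmax_iff.2 fun a b hb ha => hg (show b < a from Fin.lt_def.2 (by omega))

lemma permGL_mul (σ τ : Equiv.Perm (Fin n)) :
    permGL F n (σ * τ) = permGL F n σ * permGL F n τ :=
  Units.ext (Matrix.permMatrixHom.map_mul σ τ)

lemma permGL_one : permGL F n 1 = 1 :=
  Units.ext (Matrix.permMatrixHom.map_one)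

lemma permGL_inv (σ : Equiv.Perm (Fin n)) : (permGL F n σ)⁻¹ = permGL F n σ⁻¹ :=
  (eq_inv_of_mul_eq_one_left (by rw [← permGL_mul, inv_mul_cancel, permGL_one])).symm

lemma conj_permGL_apply (σ : Equiv.Perm (Fin n)) (m : GL (Fin n) F) (a b : Fin n) :
    ((permGL F n σ * m * (permGL F n σ)⁻¹ : GL (Fin n) F) : Matrix (Fin n) (Fin n) F) a b =
      (m : Matrix (Fin n) (Fin n) F) (σ⁻¹ a) (σ⁻¹ b) := by
  rw [permGL_inv, Units.val_mul, Units.val_mul]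
  simp [permGL, PEquiv.toMatrix_toPEquiv_mul, PEquiv.mul_toMatrix_toPEquiv]

lemma mem_Wfix_iff {σ : Equiv.Perm (Fin n)} :
    σ ∈ Wfix n j ↔ ∀ a : Fin n, ((σ a : ℕ) < j ↔ (a : ℕ) < j) := by
  rw [Wfix, Set.mem_ofPred_eq, show (fun a => σ a) = σ from rfl, Equiv.image_eq_preimage_symm,
    Set.ext_iff]
  exact ⟨fun h a => by simpa using (h (σ a)).symm, fun h x => by simpa using (h (σ.symm x)).symm⟩

lemma permGL_mem_Pmax {σ : Equiv.Perm (Fin n)} (hσ : σ ∈ Wfix n j) :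
    permGL F n σ ∈ Pmax F n j := by
  refine mem_Pmax_iff.2 fun a b hb ha => ?_
  have := (mem_Wfix_iff.1 hσ b).2 hb
  simp only [permGL, PEquiv.toMatrix_apply, Equiv.toPEquiv_apply, Option.mem_def,
    Option.some.injEq, ite_eq_right_iff, one_ne_zero, imp_false]
  rintro rfl
  simp at this
  omega

lemma transvection_neg_mul_transvection_apply {ι R : Type*} [Fintype ι] [DecidableEq ι]
    [CommRing R] {a b a' b' : ι} (hab : a ≠ b) (hab' : a' ≠ b') (s s' : R) :
    (transvection a b (-s) * transvection a' b' s') a b =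
      (if a' = a ∧ b' = b then s' else 0) - s := by
  have hb : ¬(a' = b ∧ b' = b) := fun h => hab' (h.1.trans h.2.symm)
  rw [transvection_mul_apply_same]
  simp [transvection, Matrix.single_apply, hab, hb, sub_eq_add_neg]

lemma elemGL_mem_Bsub {a b : Fin n} (hab : a < b) (c : F) :
    elemGL F n a b hab.ne c ∈ Bsub F n := by
  intro x y hxy
  have hyx : y < x := hxy
  simp only [elemGL, transvection, Matrix.add_apply, Matrix.one_apply, Matrix.single_apply,
    if_neg hyx.ne', zero_add, ite_eq_right_iff, and_imp]
  rintro rfl rfl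
  exact absurd hab (lt_asymm hyx)

lemma elemGL_zero {a b : Fin n} (hab : a ≠ b) : elemGL F n a b hab 0 = 1 :=
  Units.ext (transvection_zero a b)

lemma conj_elemGL (σ : Equiv.Perm (Fin n)) {a b : Fin n} (hab : a ≠ b) (c : F) :
    permGL F n σ * elemGL F n a b hab c * (permGL F n σ)⁻¹ =
      elemGL F n (σ a) (σ b) (σ.injective.ne hab) c := by
  ext x y
  rw [conj_permGL_apply]
  simp [elemGL, transvection, Matrix.one_apply, Matrix.single_apply, Equiv.eq_symm_apply]

lemma diag_ne_zero_of_mem_Bsub {g : GL (Fin n) F} (hg : g ∈ Bsub F n) (a : Fin n) :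
    (g : Matrix (Fin n) (Fin n) F) a a ≠ 0 := by
  have := (isUnits_det_units g).ne_zero
  rw [det_of_isUpperTriangular hg] at this
  exact Finset.prod_ne_zero_iff.1 this a (Finset.mem_univ a)

def inversions (e : Equiv.Perm (Fin n)) : Finset (Fin n × Fin n) :=
  Finset.univ.filter fun p => p.1 < p.2 ∧ e p.2 < e p.1

lemma invCount_eq_card_inversions (e : Equiv.Perm (Fin n)) :
    invCount n e = (inversions e).card :=
  rfl

lemma mem_inversions {e : Equiv.Perm (Fin n)} {c d : Fin n} :
    (c, d) ∈ inversions e ↔ c < d ∧ e d < e c := by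
  simp [inversions]

lemma mem_inversions_of_not_lt {e : Equiv.Perm (Fin n)} {a b : Fin n} (hab : a < b)
    (h : ¬e a < e b) : (a, b) ∈ inversions e :=
  mem_inversions.2 ⟨hab, lt_of_le_of_ne (not_lt.1 h) (e.injective.ne hab.ne')⟩

lemma exists_succ_lt_of_lt {α : Type*} [LinearOrder α] (f : ℕ → α) {a b : ℕ} (hab : a ≤ b)
    (h : f b < f a) : ∃ k, a ≤ k ∧ k < b ∧ f (k + 1) < f k := by
  induction b, hab using Nat.le_induction with
  | base => exact absurd h (lt_irrefl _)
  | succ b hab ih =>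
    by_cases hb : f (b + 1) < f b
    · exact ⟨b, hab, b.lt_succ_self, hb⟩
    · obtain ⟨k, hak, hkb, hk⟩ := ih ((not_lt.1 hb).trans_lt h)
      exact ⟨k, hak, hkb.trans b.lt_succ_self, hk⟩

lemma exists_adjacent_inversion {e : Equiv.Perm (Fin n)} {c d : Fin n}
    (hcd : (c, d) ∈ inversions e) :
    ∃ x y : Fin n, (x : ℕ) + 1 = y ∧ c ≤ x ∧ y ≤ d ∧ (x, y) ∈ inversions e := by
  rw [mem_inversions] at hcd
  let f : ℕ → ℕ := fun k => if hk : k < n then e ⟨k, hk⟩ else 0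
  obtain ⟨k, hck, hkd, hk⟩ := exists_succ_lt_of_lt f (Fin.le_def.1 hcd.1.le)
    (by simpa [f] using hcd.2)
  refine ⟨⟨k, by omega⟩, ⟨k + 1, by omega⟩, rfl, Fin.le_def.2 hck, Fin.le_def.2 hkd,
    mem_inversions.2 ⟨Fin.lt_def.2 (by simp), ?_⟩⟩
  simp only [f, dif_pos (show k < n by omega), dif_pos (show k + 1 < n by omega)] at hk
  exact hk

lemma swap_apply_lt_swap_apply {x y a b : Fin n} (hxy : (x : ℕ) + 1 = y) (hab : a < b)
    (hne : (a, b) ≠ (x, y)) : Equiv.swap x y a < Equiv.swap x y b := by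
  simp only [Equiv.swap_apply_def]
  split_ifs <;> simp_all [Fin.ext_iff] <;> omega

lemma invCount_mul_swap {e : Equiv.Perm (Fin n)} {x y : Fin n} (hxy : (x : ℕ) + 1 = y)
    (hd : (x, y) ∈ inversions e) : invCount n (e * Equiv.swap x y) + 1 = invCount n e := by
  rw [invCount_eq_card_inversions, invCount_eq_card_inversions,
    ← Finset.card_erase_add_one hd]
  congr 1
  refine Finset.card_equiv ((Equiv.swap x y).prodCongr (Equiv.swap x y)) fun ⟨a, b⟩ => ?_
  rw [mem_inversions] at hd
  simp only [Equiv.prodCongr_apply, Prod.map, Finset.mem_erase, mem_inversions,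
    Equiv.Perm.mul_apply, Ne, Prod.ext_iff]
  constructor
  · rintro ⟨hab, he⟩
    have hne : (a, b) ≠ (x, y) := by
      rintro ⟨⟩
      simp only [Equiv.swap_apply_left, Equiv.swap_apply_right] at he
      exact lt_asymm he hd.2
    refine ⟨fun ⟨hx, hy⟩ => ?_, swap_apply_lt_swap_apply hxy hab hne, he⟩
    rw [Equiv.swap_apply_eq_iff, Equiv.swap_apply_left] at hx
    rw [Equiv.swap_apply_eq_iff, Equiv.swap_apply_right] at hy
    subst hx hy
    exact lt_asymm hab hd.1
  · rintro ⟨hne, hlt, he⟩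
    have := swap_apply_lt_swap_apply hxy hlt (by simpa [Prod.ext_iff] using hne)
    exact ⟨by simpa using this, he⟩

lemma eq_one_of_invCount_eq_zero {e : Equiv.Perm (Fin n)} (h : invCount n e = 0) : e = 1 := by
  have hmono : StrictMono e := fun a b hab => by
    by_contra hba
    have := mem_inversions_of_not_lt hab hba
    rw [invCount_eq_card_inversions, Finset.card_eq_zero] at h
    simp [h] at this
  ext a
  exact congrArg (fun f : Fin n ≃o Fin n => (f a : ℕ))
    (Subsingleton.elim (hmono.orderIsoOfSurjective e e.surjective) (OrderIso.refl _))

lemma apply_lt_apply_of_minimal {e : Equiv.Perm (Fin n)} {S : Set (Equiv.Perm (Fin n))}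
    (hmin : ∀ y ∈ S, invCount n e ≤ invCount n (e * y)) {a b : Fin n} (hab : a < b)
    (hS : ∀ x y : Fin n, (x : ℕ) + 1 = y → a ≤ x → y ≤ b → Equiv.swap x y ∈ S) :
    e a < e b := by
  by_contra hba
  obtain ⟨x, y, hxy, hax, hyb, hinv⟩ :=
    exists_adjacent_inversion (mem_inversions_of_not_lt hab hba)
  have := hmin _ (hS x y hxy hax hyb)
  have := invCount_mul_swap hxy hinv
  omega

lemma swap_mem_Wfix {x y : Fin n} (h : (x : ℕ) < j ↔ (y : ℕ) < j) :
    Equiv.swap x y ∈ Wfix n j :=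
  mem_Wfix_iff.2 fun a => by
    rw [Equiv.swap_apply_def]
    split_ifs <;> simp_all

lemma apply_lt_apply_of_mem_minReps {u : Equiv.Perm (Fin n)} (hu : u ∈ minReps n j)
    {a b : Fin n} (hab : a < b) (hblk : (a : ℕ) < j ↔ (b : ℕ) < j) : u a < u b :=
  apply_lt_apply_of_minimal hu hab fun x y hxy hax hyb => swap_mem_Wfix (by omega)

lemma lt_and_le_of_mem_inversions {z : Equiv.Perm (Fin n)} (hz : z ∈ minRepsIn n i j)
    {c d : Fin n} (hcd : (c, d) ∈ inversions z) :
    (c : ℕ) < i ∧ i ≤ (d : ℕ) ∧ ((c : ℕ) < j ↔ (d : ℕ) < j) := by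
  obtain ⟨hlt, hzlt⟩ := mem_inversions.1 hcd
  have hblk : (c : ℕ) < j ↔ (d : ℕ) < j := by
    have := mem_Wfix_iff.1 hz.1 c
    have := mem_Wfix_iff.1 hz.1 d
    omega
  refine ⟨?_, ?_, hblk⟩ <;> by_contra <;>
    exact lt_asymm hzlt (apply_lt_apply_of_minimal hz.2 hlt fun x y hxy hcx hyd =>
      ⟨swap_mem_Wfix (by omega), swap_mem_Wfix (by omega)⟩)

lemma inversions_nonempty {e : Equiv.Perm (Fin n)} (he : e ≠ 1) : (inversions e).Nonempty :=
  Finset.nonempty_iff_ne_empty.2 fun h =>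
    he (eq_one_of_invCount_eq_zero (by rw [invCount_eq_card_inversions, h, Finset.card_empty]))

lemma eq_sT_of_inversions_eq_singleton {z : Equiv.Perm (Fin n)} (hz : z ∈ minRepsIn n i j)
    {p : Fin n × Fin n} (h : inversions z = {p}) : z = sT n i := by
  obtain ⟨x, y, hxy, -, -, hinv⟩ := exists_adjacent_inversion (h ▸ Finset.mem_singleton_self p)
  have hone : invCount n (z * Equiv.swap x y) = 0 := by
    have := invCount_mul_swap hxy hinv
    rw [invCount_eq_card_inversions z, h, Finset.card_singleton] at this
    omega
  have hzxy : z = Equiv.swap x y := by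
    simpa [mul_eq_one_iff_eq_inv] using eq_one_of_invCount_eq_zero hone
  obtain ⟨hxi, hiy, -⟩ := lt_and_le_of_mem_inversions hz hinv
  rw [hzxy, sT, dif_pos ⟨by omega, by omega⟩]
  congr 1 <;> ext <;> simp <;> omega

lemma inversions_nontrivial {z : Equiv.Perm (Fin n)} (hz : z ∈ minRepsIn n i j) (h1 : z ≠ 1)
    (hs : z ≠ sT n i) : (inversions z).Nontrivial :=
  (inversions_nonempty h1).exists_eq_singleton_or_nontrivial.resolve_left
    fun ⟨_, h⟩ => hs (eq_sT_of_inversions_eq_singleton hz h)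

def incidentPoints (i j : ℕ) (w : Equiv.Perm (Fin n)) (h : GL (Fin n) F) :
    Set (GL (Fin n) F ⧸ Pmax F n i) :=
  {x | ∃ k ∈ doubleCoset F n w, QuotientGroup.mk k = x ∧
    (QuotientGroup.mk k : GL (Fin n) F ⧸ Pmax F n j) = QuotientGroup.mk h}

lemma permGL_mem_doubleCoset (w : Equiv.Perm (Fin n)) : permGL F n w ∈ doubleCoset F n w :=
  ⟨1, one_mem _, 1, one_mem _, by group⟩

/-- `P_j ∩ u⁻¹ B u`; its `u`-conjugate is the stabilizer in `B` of the line `u P_j`. -/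
def pmaxInterConjBsub (F : Type*) [Field F] {n : ℕ} (u : Equiv.Perm (Fin n)) (j : ℕ) :
    Set (GL (Fin n) F) :=
  {m | m ∈ Pmax F n j ∧ permGL F n u * m * (permGL F n u)⁻¹ ∈ Bsub F n}

lemma incidentPoints_eq_image {u z v w : Equiv.Perm (Fin n)} (hz : z ∈ Wfix n j)
    (hv : v ∈ Wfix n i ∩ Wfix n j) (hw : w = u * z * v) {b b' : GL (Fin n) F}
    (hb : b ∈ Bsub F n) (hb' : b' ∈ Bsub F n) :
    incidentPoints i j w (b * permGL F n w * b') =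
      (fun m => (QuotientGroup.mk (b * permGL F n u * m * permGL F n z) :
        GL (Fin n) F ⧸ Pmax F n i)) ''
        pmaxInterConjBsub F u j := by
  set U := permGL F n u
  set Z := permGL F n z
  set V := permGL F n v
  have hW : permGL F n w = U * Z * V := by rw [hw, permGL_mul, permGL_mul]
  have hZVj : Z * V ∈ Pmax F n j := mul_mem (permGL_mem_Pmax hz) (permGL_mem_Pmax hv.2)
  have hVi : V ∈ Pmax F n i := permGL_mem_Pmax hv.1
  rw [hW]
  ext x
  constructor
  · rintro ⟨_, ⟨β, hβ, β', hβ', rfl⟩, rfl, hkj⟩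
    rw [QuotientGroup.eq, hW] at hkj
    rw [hW]
    refine ⟨U⁻¹ * (b⁻¹ * β) * U, ⟨?_, ?_⟩, ?_⟩
    · have key : U⁻¹ * (b⁻¹ * β) * U =
          Z * V * (β' * ((β * (U * Z * V) * β')⁻¹ * (b * (U * Z * V) * b')) * b'⁻¹)⁻¹ *
            (Z * V)⁻¹ := by group
      rw [key]
      exact mul_mem (mul_mem hZVj (inv_mem (mul_mem (mul_mem (Bsub_le_Pmax j hβ') hkj)
        (inv_mem (Bsub_le_Pmax j hb'))))) (inv_mem hZVj)
    · show U * (U⁻¹ * (b⁻¹ * β) * U) * U⁻¹ ∈ Bsub F n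
      simpa [mul_assoc] using mul_mem (inv_mem hb) hβ
    · rw [show β * (U * Z * V) * β' = b * U * (U⁻¹ * (b⁻¹ * β) * U) * Z * (V * β') by group]
      exact (QuotientGroup.mk_mul_of_mem _ (mul_mem hVi (Bsub_le_Pmax i hβ'))).symm
  · rintro ⟨m, ⟨hmP, hmB⟩, rfl⟩
    refine ⟨b * U * m * Z * V,
      ⟨b * (U * m * U⁻¹), mul_mem hb hmB, 1, one_mem _, by rw [hW]; group⟩,
      QuotientGroup.mk_mul_of_mem _ hVi, ?_⟩
    rw [QuotientGroup.eq,
      show (b * U * m * Z * V)⁻¹ * (b * (U * Z * V) * b') = (Z * V)⁻¹ * m⁻¹ * (Z * V) * b' by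
        group]
    exact mul_mem (mul_mem (mul_mem (inv_mem hZVj) (inv_mem hmP)) hZVj) (Bsub_le_Pmax j hb')

lemma mem_Bsub_of_mem_pmaxInterConjBsub {u : Equiv.Perm (Fin n)} (hu : u ∈ minReps n j)
    {m : GL (Fin n) F} (hm : m ∈ pmaxInterConjBsub F u j) : m ∈ Bsub F n := by
  obtain ⟨hmP, hmB⟩ := hm
  intro a b (hba : b < a)
  by_cases hblk : (b : ℕ) < j ↔ (a : ℕ) < j
  · simpa [conj_permGL_apply] using hmB (apply_lt_apply_of_mem_minReps hu hba hblk)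
  · exact mem_Pmax_iff.1 hmP a b (by omega) (by omega)

lemma eq_zero_or_eq_one_of_card_eq_two [Fintype F] (hF : Fintype.card F = 2) (t : F) :
    t = 0 ∨ t = 1 := by
  classical
  have : ({0, 1} : Finset F) = Finset.univ :=
    Finset.eq_univ_of_card _ (by rw [Finset.card_pair zero_ne_one, hF])
  simpa [← this] using Finset.mem_univ t

lemma exists_ne_zero_ne_one_of_two_lt_card [Fintype F] (hF : 2 < Fintype.card F) :
    ∃ t : F, t ≠ 0 ∧ t ≠ 1 := by
  classical
  obtain ⟨t, -, ht⟩ := Finset.exists_mem_notMem_of_card_lt_card (s := ({0, 1} : Finset F))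
    (t := Finset.univ) (by rwa [Finset.card_pair zero_ne_one, Finset.card_univ])
  exact ⟨t, by simpa [not_or] using ht⟩

lemma mk_mul_elemGL_mul_ne (g : GL (Fin n) F) (σ : Equiv.Perm (Fin n)) {a b a' b' : Fin n}
    (hab : a ≠ b) (hab' : a' ≠ b') (ha : i ≤ (σ⁻¹ a : ℕ)) (hb : (σ⁻¹ b : ℕ) < i) {s s' : F}
    (hss : (if a' = a ∧ b' = b then s' else 0) ≠ s) :
    (QuotientGroup.mk (g * elemGL F n a b hab s * permGL F n σ) : GL (Fin n) F ⧸ Pmax F n i) ≠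
      QuotientGroup.mk (g * elemGL F n a' b' hab' s' * permGL F n σ) := by
  rw [Ne, QuotientGroup.eq]
  intro hmem
  have key : (g * elemGL F n a b hab s * permGL F n σ)⁻¹ *
      (g * elemGL F n a' b' hab' s' * permGL F n σ) =
      permGL F n σ⁻¹ * ((elemGL F n a b hab s)⁻¹ * elemGL F n a' b' hab' s') *
        (permGL F n σ⁻¹)⁻¹ := by
    rw [← permGL_inv, inv_inv]
    group
  have h0 := mem_Pmax_iff.1 (key ▸ hmem) (σ⁻¹ a) (σ⁻¹ b) hb ha
  rw [conj_permGL_apply] at h0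
  simp only [inv_inv, Equiv.Perm.coe_inv, Equiv.apply_symm_apply] at h0
  change (transvection a b (-s) * transvection a' b' s') a b = 0 at h0
  exact hss (sub_eq_zero.1 (transvection_neg_mul_transvection_apply hab hab' s s' ▸ h0))

lemma mk_mul_permGL_swap_eq (g : GL (Fin n) F) {m : GL (Fin n) F} (hm : m ∈ Bsub F n)
    {x y : Fin n} (hxy : (x : ℕ) + 1 = y) :
    (QuotientGroup.mk (g * m * permGL F n (Equiv.swap x y)) : GL (Fin n) F ⧸ Pmax F n y) =
      QuotientGroup.mk (g * elemGL F n x y (Fin.ne_of_lt (Fin.lt_def.2 (by omega)))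
        ((m : Matrix (Fin n) (Fin n) F) x y / (m : Matrix (Fin n) (Fin n) F) y y) *
          permGL F n (Equiv.swap x y)) := by
  set t := elemGL F n x y (Fin.ne_of_lt (Fin.lt_def.2 (by omega)))
    ((m : Matrix (Fin n) (Fin n) F) x y / (m : Matrix (Fin n) (Fin n) F) y y)
  set S := permGL F n (Equiv.swap x y)
  have hS : S⁻¹ = S := by rw [permGL_inv, Equiv.swap_inv]
  have hc : t⁻¹ * m ∈ Bsub F n :=
    mul_mem (inv_mem (elemGL_mem_Bsub (Fin.lt_def.2 (by omega)) _)) hm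
  have hcxy : ((t⁻¹ * m : GL (Fin n) F) : Matrix (Fin n) (Fin n) F) x y = 0 := by
    change (transvection x y (-((m : Matrix (Fin n) (Fin n) F) x y /
      (m : Matrix (Fin n) (Fin n) F) y y)) * (m : Matrix (Fin n) (Fin n) F)) x y = 0
    rw [transvection_mul_apply_same]
    field_simp [diag_ne_zero_of_mem_Bsub hm y]
    ring
  rw [eq_comm, QuotientGroup.eq,
    show (g * t * S)⁻¹ * (g * m * S) = S * (t⁻¹ * m) * S⁻¹ by
      calc _ = S⁻¹ * (t⁻¹ * m) * S := by group
        _ = _ := by rw [hS]]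
  -- conjugating by `swap x y` moves only the `(x, y)` entry of `t⁻¹ m` into the lower-left
  -- block of `P_y`
  refine mem_Pmax_iff.2 fun a b hb ha => ?_
  rw [conj_permGL_apply, Equiv.swap_inv]
  by_cases hba : b = x ∧ a = y
  · rw [hba.1, hba.2, Equiv.swap_apply_left, Equiv.swap_apply_right]
    exact hcxy
  · exact hc (swap_apply_lt_swap_apply hxy (Fin.lt_def.2 (by omega))
      (by simpa [Prod.ext_iff] using hba))

lemma elemGL_mem_pmaxInterConjBsub {u z : Equiv.Perm (Fin n)} (hu : u ∈ minReps n j)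
    (hz : z ∈ minRepsIn n i j) {c d : Fin n} (hcd : (c, d) ∈ inversions z) (t : F) :
    elemGL F n (z d) (z c) (mem_inversions.1 hcd).2.ne t ∈ pmaxInterConjBsub F u j := by
  have hlt := (mem_inversions.1 hcd).2
  have hblk : ((z d : ℕ) < j ↔ (z c : ℕ) < j) := by
    rw [mem_Wfix_iff.1 hz.1, mem_Wfix_iff.1 hz.1]
    exact (lt_and_le_of_mem_inversions hz hcd).2.2.symm
  refine ⟨Bsub_le_Pmax j (elemGL_mem_Bsub hlt t), ?_⟩
  rw [conj_elemGL]
  exact elemGL_mem_Bsub (apply_lt_apply_of_mem_minReps hu hlt hblk) t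

lemma ncard_incidentPoints_le_one {u v : Equiv.Perm (Fin n)} (hu : u ∈ minReps n j)
    (hv : v ∈ Wfix n i ∩ Wfix n j) {h : GL (Fin n) F} (hh : h ∈ doubleCoset F n (u * v)) :
    (incidentPoints i j (u * v) h).ncard ≤ 1 := by
  obtain ⟨b, hb, b', hb', rfl⟩ := hh
  rw [incidentPoints_eq_image (z := 1) (by simp [mem_Wfix_iff]) hv (by rw [mul_one]) hb hb']
  refine (Set.ncard_le_ncard (t := {QuotientGroup.mk (b * permGL F n u)}) ?_).trans
    (Set.ncard_singleton _).le
  rintro _ ⟨m, hm, rfl⟩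
  simp only [permGL_one, mul_one, Set.mem_singleton_iff]
  exact QuotientGroup.mk_mul_of_mem _ (Bsub_le_Pmax i (mem_Bsub_of_mem_pmaxInterConjBsub hu hm))

lemma ncard_incidentPoints_le_two [Fintype F] (hF : Fintype.card F = 2) (hi : 0 < i)
    (hin : i < n) {u v : Equiv.Perm (Fin n)} (hu : u ∈ minReps n j) (hs : sT n i ∈ Wfix n j)
    (hv : v ∈ Wfix n i ∩ Wfix n j) {h : GL (Fin n) F}
    (hh : h ∈ doubleCoset F n (u * sT n i * v)) :
    (incidentPoints i j (u * sT n i * v) h).ncard ≤ 2 := by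
  obtain ⟨b, hb, b', hb', rfl⟩ := hh
  rw [incidentPoints_eq_image hs hv rfl hb hb']
  set x : Fin n := ⟨i - 1, by omega⟩
  set y : Fin n := ⟨i, hin⟩
  have hxy : (x : ℕ) + 1 = y := Nat.sub_add_cancel hi
  have hsT : sT n i = Equiv.swap x y := dif_pos ⟨hi, hin⟩
  set g := b * permGL F n u
  refine (Set.ncard_le_ncard (t := {QuotientGroup.mk (g * permGL F n (sT n i)),
    QuotientGroup.mk (g * elemGL F n x y (Fin.ne_of_lt (Fin.lt_def.2 (by omega))) 1 *
      permGL F n (sT n i))}) ?_).trans ((Set.ncard_insert_le _ _).trans (by simp))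
  rintro _ ⟨m, hm, rfl⟩
  have key := mk_mul_permGL_swap_eq g (mem_Bsub_of_mem_pmaxInterConjBsub hu hm) hxy
  simp only [hsT]
  rcases eq_zero_or_eq_one_of_card_eq_two hF ((m : Matrix (Fin n) (Fin n) F) x y /
      (m : Matrix (Fin n) (Fin n) F) y y) with ht | ht <;> rw [ht] at key
  · rw [elemGL_zero, mul_one] at key
    exact Or.inl key
  · exact Or.inr key

theorem two_lt_ncard_incidentPoints [Fintype F] {u z v : Equiv.Perm (Fin n)}
    (hu : u ∈ minReps n j) (hz : z ∈ minRepsIn n i j) (hv : v ∈ Wfix n i ∩ Wfix n j)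
    (h1 : z ≠ 1) (hs : Fintype.card F = 2 → z ≠ sT n i) :
    2 < (incidentPoints i j (u * z * v) (permGL F n (u * z * v))).ncard := by
  have himage := incidentPoints_eq_image (F := F) (u := u) hz.1 hv rfl (one_mem _) (one_mem _)
  rw [one_mul, mul_one, one_mul] at himage
  rw [himage, Set.two_lt_ncard_iff]
  have hpt {c d : Fin n} (hcd : (c, d) ∈ inversions z) (t : F) :=
    Set.mem_image_of_mem (fun m => (QuotientGroup.mk (permGL F n u * m * permGL F n z) :
      GL (Fin n) F ⧸ Pmax F n i)) (elemGL_mem_pmaxInterConjBsub hu hz hcd t)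
  have hne {c d : Fin n} (hcd : (c, d) ∈ inversions z) {a' b' : Fin n} (hab' : a' ≠ b')
      {s s' : F} (hss : (if a' = z d ∧ b' = z c then s' else 0) ≠ s) :=
    mk_mul_elemGL_mul_ne (permGL F n u) z (mem_inversions.1 hcd).2.ne hab'
      (by simpa using (lt_and_le_of_mem_inversions hz hcd).2.1)
      (by simpa using (lt_and_le_of_mem_inversions hz hcd).1) hss
  by_cases hF : Fintype.card F = 2
  · obtain ⟨⟨c, d⟩, hcd, ⟨c', d'⟩, hcd', hpair⟩ := inversions_nontrivial hz h1 (hs hF)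
    refine ⟨_, _, _, hpt hcd 0, hpt hcd 1, hpt hcd' 1, hne hcd _ (by simp),
      (hne hcd' _ (by simp)).symm, hne hcd _ ?_⟩
    rw [if_neg (by simpa [z.injective.eq_iff, and_comm, eq_comm] using hpair)]
    exact zero_ne_one
  · obtain ⟨⟨c, d⟩, hcd⟩ := inversions_nonempty h1
    obtain ⟨t, ht0, ht1⟩ := exists_ne_zero_ne_one_of_two_lt_card (F := F)
      (lt_of_le_of_ne Fintype.one_lt_card (Ne.symm hF))
    exact ⟨_, _, _, hpt hcd 0, hpt hcd 1, hpt hcd t, hne hcd _ (by simp), hne hcd _ (by simpa),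
      hne hcd _ (by simpa)⟩

theorem schubert_incidence_thin_iff_general (q : ℕ)
    (F : Type*) [Field F] [Fintype F] (hF : Fintype.card F = q)
    (n : ℕ)
    (i j : ℕ) (hi1 : 1 ≤ i) (hi2 : i ≤ n - 1)
    (w u z v : Equiv.Perm (Fin n))
    (hu : u ∈ minReps n j) (hz : z ∈ minRepsIn n i j) (hv : v ∈ Wfix n i ∩ Wfix n j)
    (hw : w = u * z * v) :
    (∀ h ∈ doubleCoset F n w,
        Set.ncard {x : GL (Fin n) F ⧸ Pmax F n i | ∃ k ∈ doubleCoset F n w,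
          QuotientGroup.mk k = x ∧
            (QuotientGroup.mk k : GL (Fin n) F ⧸ Pmax F n j) = QuotientGroup.mk h} ≤ 2) ↔
      ((2 < q → z = 1) ∧ (q = 2 → z = 1 ∨ z = sT n i)) := by
  subst hF hw
  have hrhs : ((2 < Fintype.card F → z = 1) ∧ (Fintype.card F = 2 → z = 1 ∨ z = sT n i)) ↔
      z = 1 ∨ (Fintype.card F = 2 ∧ z = sT n i) := by
    obtain h | h := (Nat.succ_le_of_lt (Fintype.one_lt_card (α := F))).eq_or_lt
    · simp [← h]
    · simp [h, h.ne']
  rw [hrhs]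
  constructor
  · intro hthin
    by_contra! hcon
    exact (two_lt_ncard_incidentPoints hu hz hv hcon.1 hcon.2).not_ge
      (hthin _ (permGL_mem_doubleCoset _))
  · rintro (rfl | ⟨hF, rfl⟩) h hh
    · rw [mul_one] at hh ⊢
      exact (ncard_incidentPoints_le_one hu hv hh).trans one_le_two
    · exact ncard_incidentPoints_le_two hF (by omega) (by omega) hu hz.1 hv hh

/-- **Corollary 4.4 for `GL_n` over a finite field:** with `w = u z v` (`u ∈ W^j`,
`z ∈ (W_j)^{i,j}`, `v ∈ W_{i,j}`), every line of the Schubert incidence structure `(X_w)_{ij}`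
is incident to at most two points if and only if `z = 1` when `q > 2`, and `z ∈ {1, s_i}`
when `q = 2`. -/
theorem schubert_incidence_thin_iff (q : ℕ) (hq : IsPrimePow q)
    (F : Type*) [Field F] [Fintype F] (hF : Fintype.card F = q)
    (n : ℕ) (hn : 2 ≤ n)
    (i j : ℕ) (hi1 : 1 ≤ i) (hi2 : i ≤ n - 1) (hj1 : 1 ≤ j) (hj2 : j ≤ n - 1) (hij : i ≠ j)
    (w u z v : Equiv.Perm (Fin n))
    (hu : u ∈ minReps n j) (hz : z ∈ minRepsIn n i j) (hv : v ∈ Wfix n i ∩ Wfix n j)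
    (hw : w = u * z * v) :
    (∀ h ∈ doubleCoset F n w,
        Set.ncard {x : GL (Fin n) F ⧸ Pmax F n i | ∃ k ∈ doubleCoset F n w,
          QuotientGroup.mk k = x ∧
            (QuotientGroup.mk k : GL (Fin n) F ⧸ Pmax F n j) = QuotientGroup.mk h} ≤ 2) ↔
      ((2 < q → z = 1) ∧ (q = 2 → z = 1 ∨ z = sT n i)) :=
  schubert_incidence_thin_iff_general q F hF n i j hi1 hi2 w u z v hu hz hv hw
end
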